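/- For n ∈ ℕ and z = x + iξ ∈ ℂ, the Gabor transform of the n-th Hermite function satisfies ⟨h_n, π(z) h₀⟩ = ∫_ℝ h_n(t) e^{−2πiξt} h₀(t − x) dt = e^{−iπxξ − (π/2)|z|²} √(πⁿ/n!) · z̄ⁿ, where z̄ = x − iξ. -/

import Mathlib

/-!
Write `G(t) = e^{-2πt²}` and `c = 2π(x - iξ)`. By the Rodrigues formula the integrand is a constant
times `e^{-πx²} G⁽ⁿ⁾(t) e^{ct}`. Each `G⁽ᵏ⁾` is a Hermite polynomial times `G`, so every
`G⁽ᵏ⁾(t) e^{ct}` is integrable, and `n` integrations by parts give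
`∫ G⁽ⁿ⁾(t) e^{ct} dt = (-c)ⁿ ∫ G(t) e^{ct} dt = (-c)ⁿ 2^{-1/2} e^{c²/8π}`.
-/

open MeasureTheory

/-- The `n`-th Hermite function, defined via the Rodrigues formula:
`hₙ(t) = (2^{1/4}/√(n!)) (−1/(2√π))ⁿ e^{π t²} (dⁿ/dtⁿ)(e^{−2π t²})`. -/
noncomputable def hermiteFun (n : ℕ) (t : ℝ) : ℝ :=
  (2 : ℝ) ^ ((1 : ℝ) / 4) / Real.sqrt (n.factorial : ℝ) *
    (-1 / (2 * Real.sqrt Real.pi)) ^ n *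
      (Real.exp (Real.pi * t ^ 2) *
        iteratedDeriv n (fun s : ℝ => Real.exp (-(2 * Real.pi * s ^ 2))) t)

open Polynomial
open scoped Real Complex

/-- `|t|ⁿ ≤ n! e^{|t|} ≤ n! (eᵗ + e⁻ᵗ)`: the monomial is absorbed by shifting `c` by `±1`. -/
lemma integrable_pow_mul_cexp_quadratic {b : ℂ} (hb : b.re < 0) (c : ℂ) (n : ℕ) :
    Integrable fun t : ℝ => (t : ℂ) ^ n * cexp (b * t ^ 2 + c * t) := by
  have hdom : Integrable fun t : ℝ =>
      (n.factorial : ℝ) * (‖cexp (b * t ^ 2 + (c + (1 : ℝ)) * t + 0)‖ +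
        ‖cexp (b * t ^ 2 + (c + (-1 : ℝ)) * t + 0)‖) :=
    ((integrable_cexp_quadratic' hb _ 0).norm.add
      (integrable_cexp_quadratic' hb _ 0).norm).const_mul _
  refine hdom.mono' (by fun_prop) (ae_of_all _ fun t => ?_)
  set r := (b * t ^ 2 + c * t).re
  have hre (s : ℝ) : (b * t ^ 2 + (c + s) * t + 0).re = r + s * t := by
    simp only [r, ← Complex.ofReal_pow, add_zero, Complex.add_re, Complex.mul_re,
      Complex.ofReal_re, Complex.ofReal_im, mul_zero, sub_zero]
    ring
  rw [norm_mul, norm_pow, Complex.norm_real, Real.norm_eq_abs, Complex.norm_exp,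
    Complex.norm_exp, Complex.norm_exp, hre, hre]
  have hpow : |t| ^ n ≤ n.factorial * rexp |t| := by
    have := Real.pow_div_factorial_le_exp _ (abs_nonneg t) n
    rwa [div_le_iff₀ (by positivity), mul_comm] at this
  calc |t| ^ n * rexp r ≤ n.factorial * (rexp t + rexp (-t)) * rexp r := by
        gcongr
        exact hpow.trans (by gcongr; exact Real.exp_abs_le t)
    _ = _ := by rw [Real.exp_add, Real.exp_add]; ring_nf

lemma integrable_eval_mul_cexp_quadratic {b : ℂ} (hb : b.re < 0) (c : ℂ) (p : ℝ[X]) :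
    Integrable fun t : ℝ => ((p.eval t : ℝ) : ℂ) * cexp (b * t ^ 2 + c * t) := by
  refine (integrable_finsetSum (Finset.range (p.natDegree + 1)) fun i _ =>
    (integrable_pow_mul_cexp_quadratic hb c i).const_mul (p.coeff i : ℂ)).congr
    (ae_of_all _ fun t => ?_)
  simp only [eval_eq_sum_range, Complex.ofReal_sum, Finset.sum_mul]
  refine Finset.sum_congr rfl fun i _ => ?_
  push_cast
  ring

lemma iteratedDeriv_exp_neg_mul_sq {a : ℝ} (ha : 0 ≤ a) (n : ℕ) (t : ℝ) :
    iteratedDeriv n (fun s => rexp (-(a * s ^ 2))) t =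
      (-√(2 * a)) ^ n * aeval (√(2 * a) * t) (hermite n) * rexp (-(a * t ^ 2)) := by
  have hG : (fun s => rexp (-(a * s ^ 2))) = fun s => rexp (-((√(2 * a) * s) ^ 2 / 2)) := by
    funext s
    rw [mul_pow, Real.sq_sqrt (by positivity)]
    ring_nf
  have hscale := congrFun (iteratedDeriv_comp_const_mul (n := n)
    (f := fun y => rexp (-(y ^ 2 / 2))) (by fun_prop) (√(2 * a))) t
  rw [hG, hscale, iteratedDeriv_eq_iterate, deriv_gaussian_eq_hermite_mul_gaussian,
    ← congrFun hG t, neg_pow]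
  ring

lemma integrable_cexp_mul_iteratedDeriv_exp_neg_mul_sq {a : ℝ} (ha : 0 < a) (c : ℂ) (k : ℕ) :
    Integrable fun t : ℝ =>
      cexp (c * t) * ((iteratedDeriv k (fun s => rexp (-(a * s ^ 2))) t : ℝ) : ℂ) := by
  have hb : (-(a : ℂ)).re < 0 := by simpa using ha
  refine ((integrable_eval_mul_cexp_quadratic hb c
    (((hermite k).map (algebraMap ℤ ℝ)).comp (C √(2 * a) * X))).const_mul
      (((-√(2 * a)) ^ k : ℝ) : ℂ)).congr (ae_of_all _ fun t => ?_)
  simp only [iteratedDeriv_exp_neg_mul_sq ha.le, eval_comp, eval_map_algebraMap, eval_mul,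
    eval_C, eval_X]
  push_cast
  rw [Complex.exp_add, neg_mul]
  ring

theorem integral_cexp_mul_iteratedDeriv {f : ℝ → ℝ} {c : ℂ} {n : ℕ} (hf : ContDiff ℝ n f)
    (hint : ∀ k ≤ n, Integrable fun t : ℝ => cexp (c * t) * ((iteratedDeriv k f t : ℝ) : ℂ)) :
    ∫ t : ℝ, cexp (c * t) * ((iteratedDeriv n f t : ℝ) : ℂ) =
      (-c) ^ n * ∫ t : ℝ, cexp (c * t) * ((f t : ℝ) : ℂ) := by
  induction n with
  | zero => simp
  | succ n ih =>
    have hexp (t : ℝ) : HasDerivAt (fun t : ℝ => cexp (c * t)) (c * cexp (c * t)) t := by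
      simpa [mul_comm] using ((hasDerivAt_id t).ofReal_comp.const_mul c).cexp
    have hderiv (t : ℝ) : HasDerivAt (fun t => ((iteratedDeriv n f t : ℝ) : ℂ))
        ((iteratedDeriv (n + 1) f t : ℝ) : ℂ) t := by
      rw [iteratedDeriv_succ]
      exact (hf.differentiable_iteratedDeriv' n).differentiableAt.hasDerivAt.ofReal_comp
    have hint' : Integrable fun t : ℝ => c * cexp (c * t) * ((iteratedDeriv n f t : ℝ) : ℂ) := by
      simpa only [mul_assoc] using (hint n n.le_succ).const_mul c
    rw [integral_mul_deriv_eq_deriv_mul_of_integrable (fun t _ => hexp t) (fun t _ => hderiv t)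
      (hint _ le_rfl) hint' (hint n n.le_succ)]
    simp only [mul_assoc]
    rw [integral_const_mul, ih (hf.of_le (by norm_cast; omega)) fun k hk => hint k (by omega)]
    ring

lemma integral_cexp_mul_exp_neg_mul_sq {a : ℝ} (ha : 0 < a) (c : ℂ) :
    ∫ t : ℝ, cexp (c * t) * ((rexp (-(a * t ^ 2)) : ℝ) : ℂ) =
      √(π / a) * cexp (c ^ 2 / (4 * a)) := by
  have hb : (-(a : ℂ)).re < 0 := by simpa using ha
  calc ∫ t : ℝ, cexp (c * t) * ((rexp (-(a * t ^ 2)) : ℝ) : ℂ)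
      = ∫ t : ℝ, cexp (-a * t ^ 2 + c * t + 0) := by
        congr! 2 with t
        push_cast
        rw [← Complex.exp_add]
        ring_nf
    _ = √(π / a) * cexp (c ^ 2 / (4 * a)) := by
        rw [integral_cexp_quadratic hb, neg_neg, Real.sqrt_eq_rpow,
          Complex.ofReal_cpow (by positivity)]
        push_cast
        ring_nf

lemma integral_cexp_mul_iteratedDeriv_exp_neg_mul_sq {a : ℝ} (ha : 0 < a) (c : ℂ) (n : ℕ) :
    ∫ t : ℝ, cexp (c * t) * ((iteratedDeriv n (fun s => rexp (-(a * s ^ 2))) t : ℝ) : ℂ) =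
      (-c) ^ n * √(π / a) * cexp (c ^ 2 / (4 * a)) := by
  rw [integral_cexp_mul_iteratedDeriv (by fun_prop)
    fun k _ => integrable_cexp_mul_iteratedDeriv_exp_neg_mul_sq ha c k,
    integral_cexp_mul_exp_neg_mul_sq ha, mul_assoc]

lemma hermiteFun_zero (t : ℝ) : hermiteFun 0 t = 2 ^ ((1 : ℝ) / 4) * rexp (-(π * t ^ 2)) := by
  simp only [hermiteFun, iteratedDeriv_zero, Nat.factorial_zero, Nat.cast_one, Real.sqrt_one,
    div_one, pow_zero, mul_one, ← Real.exp_add]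
  ring_nf

lemma hermiteFun_mul_cexp_mul_hermiteFun_zero (n : ℕ) (x ξ t : ℝ) :
    (hermiteFun n t : ℂ) * cexp (-(2 * π * Complex.I * ξ * t)) * (hermiteFun 0 (t - x) : ℂ) =
      ((√2 / √n.factorial * (-1 / (2 * √π)) ^ n : ℝ) : ℂ) * cexp (-π * x ^ 2) *
        (cexp (2 * π * (x - ξ * Complex.I) * t) *
          ((iteratedDeriv n (fun s => rexp (-(2 * π * s ^ 2))) t : ℝ) : ℂ)) := by
  have hsqrt_two : (2 : ℝ) ^ ((1 : ℝ) / 4) * 2 ^ ((1 : ℝ) / 4) = √2 := by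
    rw [← Real.rpow_add two_pos, Real.sqrt_eq_rpow]
    norm_num
  have hexp : cexp (π * t ^ 2) * cexp (-(2 * π * Complex.I * ξ * t)) *
      cexp (-(π * (t - x) ^ 2)) = cexp (-π * x ^ 2) * cexp (2 * π * (x - ξ * Complex.I) * t) := by
    simp only [← Complex.exp_add]
    ring_nf
  rw [hermiteFun_zero, hermiteFun, ← hsqrt_two]
  push_cast
  linear_combination (((2 : ℝ) ^ ((1 : ℝ) / 4) : ℝ) : ℂ) ^ 2 / √(n.factorial : ℝ) *
    (-1 / (2 * √π)) ^ n * ((iteratedDeriv n (fun s => rexp (-(2 * π * s ^ 2))) t : ℝ) : ℂ) * hexp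

lemma gabor_transform_hermite_constant (n : ℕ) :
    √2 / √n.factorial * (-1 / (2 * √π)) ^ n * (-(2 * π)) ^ n * √(π / (2 * π)) =
      √(π ^ n / n.factorial) := by
  have hsqrt_pi : -1 / (2 * √π) * -(2 * π) = √π := by
    field_simp
    rw [Real.sq_sqrt Real.pi_pos.le]
  have hsqrt_half : √2 * √(π / (2 * π)) = 1 := by
    rw [show π / (2 * π) = 2⁻¹ by field_simp, ← Real.sqrt_mul zero_le_two,
      mul_inv_cancel₀ two_ne_zero, Real.sqrt_one]
  have hsqrt_pow : √(π ^ n) = √π ^ n := by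
    rw [Real.sqrt_eq_iff_mul_self_eq (by positivity) (by positivity), ← mul_pow,
      Real.mul_self_sqrt Real.pi_pos.le]
  calc _ = √2 * √(π / (2 * π)) * (-1 / (2 * √π) * -(2 * π)) ^ n / √n.factorial := by
        rw [mul_pow]
        ring
    _ = √(π ^ n / n.factorial) := by
        rw [hsqrt_half, hsqrt_pi, one_mul, Real.sqrt_div' _ (Nat.cast_nonneg _), hsqrt_pow]

theorem gabor_transform_hermite (n : ℕ) (x ξ : ℝ) :
    ∫ t : ℝ,
        (hermiteFun n t : ℂ) * Complex.exp (-(2 * Real.pi * Complex.I * ξ * t)) *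
          (hermiteFun 0 (t - x) : ℂ)
      = Complex.exp (-(Complex.I * Real.pi * x * ξ) - Real.pi / 2 * (x ^ 2 + ξ ^ 2)) *
          (Real.sqrt (Real.pi ^ n / (n.factorial : ℝ)) : ℂ) *
            ((x : ℂ) - ξ * Complex.I) ^ n := by
  simp_rw [hermiteFun_mul_cexp_mul_hermiteFun_zero]
  rw [integral_const_mul, integral_cexp_mul_iteratedDeriv_exp_neg_mul_sq (by positivity)]
  set w : ℂ := x - ξ * Complex.I
  have hexp : cexp (-π * x ^ 2) * cexp ((2 * π * w) ^ 2 / (4 * (2 * π : ℝ))) =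
      cexp (-(Complex.I * π * x * ξ) - π / 2 * (x ^ 2 + ξ ^ 2)) := by
    rw [← Complex.exp_add]
    congr 1
    have hπ : (π : ℂ) ≠ 0 := by exact_mod_cast Real.pi_ne_zero
    push_cast
    field_simp
    linear_combination (4 * ξ ^ 2 : ℂ) * Complex.I_sq
  rw [← hexp, ← gabor_transform_hermite_constant, neg_mul_eq_neg_mul, mul_pow]
  push_cast
  ring
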